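/- arXiv:2401.08028 — 3 statements merged into one kernel-verified Lean document; each statement's English description precedes it below -/
import Mathlib

section
/- There exists an absolute constant C > 0 such that for every θ ∈ (0, π/4] and every real t ≥ 0, one has |√(1 + tan²θ · t²) − cos θ − (1/2)·tan²θ·(t² + 1)| ≤ C·(1 + t⁴)·θ⁴. -/
/-!
With `s = tan²θ` one has `cos θ = (1 + s)^(-1/2)`, so the integrand is
`√(1 + s t²) - (1 + s)^(-1/2)`. The second-order Taylor polynomials of `√(1 + x)` and
`(1 + x)^(-1/2)` at `0` are `1 + x/2` and `1 - x/2`, whose difference at `x = s t²`, resp. `x = s`,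
is exactly `(1/2) s (t² + 1)`; both remainders are `O(s²(1 + t⁴))`, and `s ≤ 4θ²`.
-/

open Real Set

lemma abs_sqrt_one_add_sub_le {x : ℝ} (hx : 0 ≤ x) :
    |√(1 + x) - (1 + x / 2)| ≤ x ^ 2 / 8 := by
  have hsq : √(1 + x) ^ 2 = 1 + x := sq_sqrt (by linarith)
  have hupper : √(1 + x) ≤ 1 + x / 2 := by
    nlinarith [sq_nonneg (√(1 + x) - (1 + x / 2)), sqrt_nonneg (1 + x)]
  have hlower : 1 + x / 2 - x ^ 2 / 8 ≤ √(1 + x) := by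
    rcases le_or_gt x 8 with h8 | h8
    · exact le_sqrt_of_sq_le (by nlinarith [mul_le_mul_of_nonneg_left h8 (pow_nonneg hx 3)])
    · nlinarith [sq_nonneg (x - 8), sqrt_nonneg (1 + x)]
  rw [abs_le]
  constructor <;> linarith

lemma abs_inv_sqrt_one_add_sub_le {s : ℝ} (hs : 0 ≤ s) :
    |(√(1 + s))⁻¹ - (1 - s / 2)| ≤ 3 * s ^ 2 / 8 := by
  set c := (√(1 + s))⁻¹
  have hc : 0 < c := inv_pos.2 (sqrt_pos.2 (by linarith))
  have hcs : (1 + s) * c ^ 2 = 1 := by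
    rw [inv_pow, sq_sqrt (by linarith), mul_inv_cancel₀ (by linarith)]
  have hlower : 1 - s / 2 ≤ c := by
    rcases le_or_gt s 2 with hs2 | hs2
    · refine (pow_le_pow_iff_left₀ (by linarith) hc.le two_ne_zero).1 ?_
      -- `(1 + s) (1 - s/2)² = 1 - s² (3 - s) / 4`
      nlinarith [mul_nonneg (sq_nonneg s) (by linarith : (0 : ℝ) ≤ 3 - s)]
    · linarith
  have hg : 0 < 1 - s / 2 + 3 * s ^ 2 / 8 := by nlinarith [sq_nonneg (s - 2 / 3)]
  -- `(1 + s) (1 - s/2 + 3s²/8)² - 1 = s³ (40 - 15 s + 9 s²) / 64`; the quadratic has no real root.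
  have hcubic : 0 ≤ s ^ 3 * (40 - 15 * s + 9 * s ^ 2) :=
    mul_nonneg (pow_nonneg hs 3) (by nlinarith [sq_nonneg (s - 5 / 6)])
  have hupper : c ≤ 1 - s / 2 + 3 * s ^ 2 / 8 := by
    refine (pow_le_pow_iff_left₀ hc.le hg.le two_ne_zero).1 ?_
    nlinarith
  rw [abs_le]
  constructor <;> linarith

lemma abs_sqrt_one_add_mul_sub_inv_sqrt_le {s u : ℝ} (hs : 0 ≤ s) (hu : 0 ≤ u) :
    |√(1 + s * u) - (√(1 + s))⁻¹ - (1 / 2) * s * (u + 1)| ≤ 3 / 8 * s ^ 2 * (1 + u ^ 2) := by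
  have hA := abs_sqrt_one_add_sub_le (mul_nonneg hs hu)
  have hB := abs_inv_sqrt_one_add_sub_le hs
  calc |√(1 + s * u) - (√(1 + s))⁻¹ - (1 / 2) * s * (u + 1)|
      = |(√(1 + s * u) - (1 + s * u / 2)) - ((√(1 + s))⁻¹ - (1 - s / 2))| := by ring_nf
    _ ≤ |√(1 + s * u) - (1 + s * u / 2)| + |(√(1 + s))⁻¹ - (1 - s / 2)| := abs_sub _ _
    _ ≤ (s * u) ^ 2 / 8 + 3 * s ^ 2 / 8 := add_le_add hA hB
    _ ≤ 3 / 8 * s ^ 2 * (1 + u ^ 2) := by nlinarith [sq_nonneg (s * u)]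

lemma tan_sq_le_four_mul_sq {θ : ℝ} (hθ : |θ| ≤ 1) : tan θ ^ 2 ≤ 4 * θ ^ 2 := by
  have hθsq : θ ^ 2 ≤ 1 := (sq_le_one_iff_abs_le_one θ).2 hθ
  have hcos : 1 / 2 ≤ cos θ := by linarith [one_sub_sq_div_two_le_cos (x := θ)]
  have hcos_sq : 1 / 4 ≤ cos θ ^ 2 := by nlinarith
  rw [tan_eq_sin_div_cos, div_pow, div_le_iff₀ (by positivity)]
  nlinarith [sin_sq_le_sq (x := θ), mul_le_mul_of_nonneg_left hcos_sq (sq_nonneg θ)]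

/-- Taylor-type expansion linking the capillary integrand `√(1 + tan²θ · t²) − cos θ`
to the Alt–Caffarelli integrand `(1/2) tan²θ (t² + 1)`, with error of order `θ⁴`. -/
theorem capillary_integrand_expansion :
    ∃ C : ℝ, 0 < C ∧
      ∀ θ ∈ Ioc (0 : ℝ) (π / 4), ∀ t : ℝ, 0 ≤ t →
        |Real.sqrt (1 + Real.tan θ ^ 2 * t ^ 2) - Real.cos θ
            - (1 / 2) * Real.tan θ ^ 2 * (t ^ 2 + 1)|
          ≤ C * (1 + t ^ 4) * θ ^ 4 := by
  refine ⟨6, by norm_num, ?_⟩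
  rintro θ ⟨hθ0, hθπ⟩ t -
  have hθ1 : |θ| ≤ 1 := by rw [abs_of_pos hθ0]; linarith [pi_le_four]
  have htan : tan θ ^ 2 ≤ 4 * θ ^ 2 := tan_sq_le_four_mul_sq hθ1
  have htan_sq : (tan θ ^ 2) ^ 2 ≤ 16 * θ ^ 4 := by
    nlinarith [pow_le_pow_left₀ (sq_nonneg (tan θ)) htan 2]
  rw [← inv_sqrt_one_add_tan_sq (cos_pos_of_le_one hθ1)]
  calc _ ≤ 3 / 8 * (tan θ ^ 2) ^ 2 * (1 + (t ^ 2) ^ 2) :=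
        abs_sqrt_one_add_mul_sub_inv_sqrt_le (sq_nonneg _) (sq_nonneg _)
    _ ≤ 3 / 8 * (16 * θ ^ 4) * (1 + t ^ 4) := by
        rw [← pow_mul t, show 2 * 2 = 4 from rfl]
        gcongr
    _ = 6 * (1 + t ^ 4) * θ ^ 4 := by ring
end

section
/- There exists an absolute constant C > 0 such that the following holds for every n ≥ 1. Let U ⊆ ℝⁿ be a bounded measurable set, let θ ∈ (0, π/4], let L ≥ 0, and let v : ℝⁿ → ℝ be a nonnegative Lipschitz function with Lipschitz constant at most L. Then |∫_{U ∩ {v>0}} (√(1 + tan²θ·|Dv(x)|²) − cos θ) dx − (1/2)·tan²θ·∫_U (|Dv(x)|² + 𝟙_{v>0}(x)) dx| ≤ C·(1 + L⁴)·θ⁴·|U|, where |U| denotes the Lebesgue measure of U. -/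
/-! For `s ≥ 0`, `√(1 + s) = 1 + s/2 + O(s²)`, and for `0 ≤ θ ≤ π/4`,
`1 - cos θ = tan² θ / 2 + O(θ⁴)` with `tan θ ≤ 2θ`. Taking `s = tan² θ |Dv|² ≤ 4θ²L²`, the
integrand `√(1 + tan² θ |Dv|²) - cos θ` is `½ tan² θ (|Dv|² + 1) + O((1 + L⁴) θ⁴)` pointwise,
and integrating over `U ∩ {v > 0}` gives the estimate, since `J_U(v)` is also an integral over
`U ∩ {v > 0}`: the nonnegative `v` is minimal, hence has zero derivative, wherever it vanishes. -/

open MeasureTheory Metric Set Filter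

/-- The Alt–Caffarelli functional `J_U(w) = ∫_U (|Dw|² + 1_{w>0})`, with the gradient
realized as the Fréchet derivative (which exists a.e. by Rademacher's theorem). -/
noncomputable def ACF {n : ℕ} (U : Set (EuclideanSpace ℝ (Fin n)))
    (w : EuclideanSpace ℝ (Fin n) → ℝ) : ℝ :=
  ∫ x in U, (‖fderiv ℝ w x‖ ^ 2 + Set.indicator {y | 0 < w y} (fun _ => (1 : ℝ)) x)

namespace Real

theorem abs_sqrt_one_add_sub_le {s : ℝ} (hs : 0 ≤ s) :
    |√(1 + s) - (1 + s / 2)| ≤ s ^ 2 / 8 := by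
  have hsq : √(1 + s) ^ 2 = 1 + s := sq_sqrt (by linarith)
  have hone : 1 ≤ √(1 + s) := one_le_sqrt.2 (by linarith)
  rw [abs_le]
  constructor <;> nlinarith [sq_nonneg (√(1 + s) - 1), sq_nonneg (√(1 + s) - 1 - s / 2)]

theorem half_le_cos_of_le_pi_div_four {θ : ℝ} (h0 : 0 ≤ θ) (hθ : θ ≤ π / 4) :
    1 / 2 ≤ cos θ := by
  have hsqrt : 1 ≤ √2 := one_le_sqrt.2 (by norm_num)
  calc 1 / 2 ≤ √2 / 2 := by linarith
    _ = cos (π / 4) := cos_pi_div_four.symm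
    _ ≤ cos θ := cos_le_cos_of_nonneg_of_le_pi h0 (by linarith [pi_pos]) hθ

theorem tan_le_two_mul {θ : ℝ} (h0 : 0 ≤ θ) (hθ : θ ≤ π / 4) : tan θ ≤ 2 * θ := by
  have hcos := half_le_cos_of_le_pi_div_four h0 hθ
  rw [tan_eq_sin_div_cos, div_le_iff₀ (by linarith)]
  nlinarith [sin_le h0]

theorem abs_one_sub_cos_sub_tan_sq_div_two_le {θ : ℝ} (h0 : 0 ≤ θ) (hθ : θ ≤ π / 4) :
    |1 - cos θ - tan θ ^ 2 / 2| ≤ 3 / 2 * θ ^ 4 := by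
  set c := cos θ
  have hc : 1 / 2 ≤ c := half_le_cos_of_le_pi_div_four h0 hθ
  have hc1 : c ≤ 1 := cos_le_one θ
  have hc2 : 1 - θ ^ 2 / 2 ≤ c := one_sub_sq_div_two_le_cos
  have hc0 : c ≠ 0 := by linarith
  have htan : tan θ ^ 2 * c ^ 2 = 1 - c ^ 2 := by
    rw [tan_eq_sin_div_cos, div_pow, div_mul_cancel₀ _ (pow_ne_zero 2 hc0), sin_sq]
  -- tan² θ / 2 - (1 - cos θ) = (1 - cos θ)² (1 + 2 cos θ) / (2 cos² θ)
  have hdiff : (tan θ ^ 2 / 2 - (1 - c)) * (2 * c ^ 2) = (1 - c) ^ 2 * (1 + 2 * c) := by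
    linear_combination htan
  have hgap : (1 - c) ^ 2 ≤ (θ ^ 2 / 2) ^ 2 := pow_le_pow_left₀ (by linarith) (by linarith) 2
  have hnum : (1 - c) ^ 2 * (1 + 2 * c) ≤ 3 / 4 * θ ^ 4 := by nlinarith
  have hnonneg : 0 ≤ tan θ ^ 2 / 2 - (1 - c) := by nlinarith [sq_nonneg (1 - c)]
  have hscale : (tan θ ^ 2 / 2 - (1 - c)) * (1 / 2) ≤ (tan θ ^ 2 / 2 - (1 - c)) * (2 * c ^ 2) :=
    mul_le_mul_of_nonneg_left (by nlinarith) hnonneg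
  rw [abs_sub_comm, abs_le]
  constructor <;> nlinarith [pow_nonneg h0 4]

theorem abs_sqrt_one_add_tan_sq_mul_sub_le {θ a L : ℝ} (h0 : 0 ≤ θ) (hθ : θ ≤ π / 4)
    (ha : |a| ≤ L) :
    |√(1 + tan θ ^ 2 * a ^ 2) - cos θ - 1 / 2 * tan θ ^ 2 * (a ^ 2 + 1)|
      ≤ 2 * (1 + L ^ 4) * θ ^ 4 := by
  set s := tan θ ^ 2 * a ^ 2
  have hs : 0 ≤ s := by positivity
  have htan : 0 ≤ tan θ := tan_nonneg_of_nonneg_of_le_pi_div_two h0 (by linarith [pi_pos])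
  have hs2 : s ^ 2 ≤ 16 * θ ^ 4 * L ^ 4 :=
    calc s ^ 2 = tan θ ^ 4 * |a| ^ 4 := by rw [pow_abs, abs_of_nonneg (by positivity)]; ring
      _ ≤ (2 * θ) ^ 4 * L ^ 4 := by
        gcongr
        exact tan_le_two_mul h0 hθ
      _ = 16 * θ ^ 4 * L ^ 4 := by ring
  calc |√(1 + s) - cos θ - 1 / 2 * tan θ ^ 2 * (a ^ 2 + 1)|
      = |(√(1 + s) - (1 + s / 2)) + (1 - cos θ - tan θ ^ 2 / 2)| := by congr 1; ring
    _ ≤ s ^ 2 / 8 + 3 / 2 * θ ^ 4 :=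
      (abs_add_le _ _).trans
        (add_le_add (abs_sqrt_one_add_sub_le hs) (abs_one_sub_cos_sub_tan_sq_div_two_le h0 hθ))
    _ ≤ 2 * (1 + L ^ 4) * θ ^ 4 := by nlinarith [pow_nonneg h0 4]

end Real

open Real in
theorem abs_integral_sqrt_one_add_tan_sq_mul_sub_le {X : Type*} [MeasurableSpace X]
    {μ : Measure X} [IsFiniteMeasure μ] {g : X → ℝ} (hg : AEStronglyMeasurable g μ)
    {θ L : ℝ} (hgL : ∀ x, |g x| ≤ L) (h0 : 0 ≤ θ) (hθ : θ ≤ π / 4) :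
    |(∫ x, (√(1 + tan θ ^ 2 * g x ^ 2) - cos θ) ∂μ) - 1 / 2 * tan θ ^ 2 * ∫ x, (g x ^ 2 + 1) ∂μ|
      ≤ 2 * (1 + L ^ 4) * θ ^ 4 * μ.real univ := by
  set e := fun x ↦ √(1 + tan θ ^ 2 * g x ^ 2) - cos θ - 1 / 2 * tan θ ^ 2 * (g x ^ 2 + 1)
  have he : ∀ x, ‖e x‖ ≤ 2 * (1 + L ^ 4) * θ ^ 4 := fun x ↦
    abs_sqrt_one_add_tan_sq_mul_sub_le h0 hθ (hgL x)
  have he_int : Integrable e μ := Integrable.of_bound (by fun_prop) _ (ae_of_all _ he)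
  have hq_int : Integrable (fun x ↦ g x ^ 2 + 1) μ := by
    refine Integrable.of_bound (by fun_prop) (L ^ 2 + 1) (ae_of_all _ fun x ↦ ?_)
    have : g x ^ 2 ≤ L ^ 2 := sq_le_sq.2 ((hgL x).trans (le_abs_self L))
    rw [Real.norm_of_nonneg (by positivity)]
    linarith
  have hsplit : ∫ x, (√(1 + tan θ ^ 2 * g x ^ 2) - cos θ) ∂μ
      = ∫ x, e x ∂μ + 1 / 2 * tan θ ^ 2 * ∫ x, (g x ^ 2 + 1) ∂μ := by
    rw [← integral_const_mul, ← integral_add he_int (hq_int.const_mul _)]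
    simp only [e, sub_add_cancel]
  rw [hsplit, add_sub_cancel_right, ← Real.norm_eq_abs]
  exact norm_integral_le_of_norm_le_const (ae_of_all _ he)

theorem ACF_eq_setIntegral_pos {n : ℕ} (U : Set (EuclideanSpace ℝ (Fin n)))
    {w : EuclideanSpace ℝ (Fin n) → ℝ} (hw : ∀ x, 0 ≤ w x) (hwm : Measurable w) :
    ACF U w = ∫ x in U ∩ {y | 0 < w y}, (‖fderiv ℝ w x‖ ^ 2 + 1) := by
  have hpos : MeasurableSet {y | 0 < w y} := measurableSet_lt measurable_const hwm
  have hintegrand : ∀ x, ‖fderiv ℝ w x‖ ^ 2 + {y | 0 < w y}.indicator (fun _ ↦ (1 : ℝ)) x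
      = {y | 0 < w y}.indicator (fun z ↦ ‖fderiv ℝ w z‖ ^ 2 + 1) x := by
    intro x
    by_cases hx : 0 < w x
    · simp only [indicator_of_mem (show x ∈ {y | 0 < w y} from hx)]
    · have hzero : w x = 0 := le_antisymm (not_lt.1 hx) (hw x)
      have hmin : IsLocalMin w x := Eventually.of_forall fun y ↦ hzero ▸ hw y
      simp [indicator_of_notMem (show x ∉ {y | 0 < w y} from hx), hmin.fderiv_eq_zero]
  simp only [ACF, hintegrand]
  exact setIntegral_indicator hpos

/-- Rigorous expansion of the capillary graph energy of `u = tanθ · v` in terms of the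
Alt–Caffarelli functional `J_U(v)`, with error of order `θ⁴`. -/
theorem capillary_energy_AC_expansion :
    ∃ C : ℝ, 0 < C ∧
      ∀ (n : ℕ), 1 ≤ n →
        ∀ U : Set (EuclideanSpace ℝ (Fin n)), MeasurableSet U → Bornology.IsBounded U →
          ∀ θ ∈ Set.Ioc (0 : ℝ) (Real.pi / 4), ∀ L : ℝ, 0 ≤ L →
            ∀ v : EuclideanSpace ℝ (Fin n) → ℝ, (∀ x, 0 ≤ v x) →
              LipschitzWith (Real.toNNReal L) v →
              |(∫ x in U ∩ {y | 0 < v y},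
                  (Real.sqrt (1 + Real.tan θ ^ 2 * ‖fderiv ℝ v x‖ ^ 2) - Real.cos θ))
                - (1 / 2) * Real.tan θ ^ 2 * ACF U v|
              ≤ C * (1 + L ^ 4) * θ ^ 4 * (volume U).toReal := by
  refine ⟨2, two_pos, ?_⟩
  rintro n - U - hU θ ⟨hθ0, hθ⟩ L hL v hv hlip
  have hU_finite : volume U < ⊤ := hU.measure_lt_top
  have hS_sub : U ∩ {y | 0 < v y} ⊆ U := inter_subset_left
  have : IsFiniteMeasure (volume.restrict (U ∩ {y | 0 < v y})) :=
    isFiniteMeasure_restrict.2 ((measure_mono hS_sub).trans_lt hU_finite).ne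
  have hgrad : ∀ x, |‖fderiv ℝ v x‖| ≤ L := fun x ↦ by
    simpa [Real.coe_toNNReal L hL] using norm_fderiv_le_of_lipschitz ℝ hlip (x₀ := x)
  rw [ACF_eq_setIntegral_pos U hv hlip.continuous.measurable]
  calc _ ≤ 2 * (1 + L ^ 4) * θ ^ 4 * volume.real (U ∩ {y | 0 < v y}) := by
        simpa using abs_integral_sqrt_one_add_tan_sq_mul_sub_le (μ := volume.restrict _)
          (measurable_fderiv ℝ v).norm.aestronglyMeasurable hgrad hθ0.le hθ
    _ ≤ 2 * (1 + L ^ 4) * θ ^ 4 * (volume U).toReal := by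
        gcongr
        exact measureReal_mono hS_sub hU_finite.ne
end

section
/- For every integer n with 2 ≤ n ≤ 6 and every constant c > 0, there exists θ₁ ∈ (0, π/2) such that for every θ ∈ (π/2 − θ₁, π/2] there exist real numbers p ∈ (1/2, 1), ε > 0, and λ ∈ (0, 1) satisfying the following four inequalities, where K denotes |cot θ| / sin θ: (i) 3·c·K ≤ p·(p − 2 + (1 − λ)·(1 + 2/n) + λ); (ii) (1 + ε)² ≤ 2·(1 − 2·c·K); (iii) (n/2 − 2 + ε)² ≤ 2·(1 − 2·c·K); (iv) 1 − p + 2·c·K ≥ 0. -/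
/-!
The angle enters only through `c K`, and `K = |cot θ| / sin θ` is continuous at `π/2` with value
`0`. Hence `c K` is as small as we like for `θ` close to `π/2`, and then the fixed choice
`p = 9/10`, `ε = λ = 1/10` works: `2 ≤ n` keeps `(n/2 - 2 + ε)²` below `(1 + ε)²`, and `n ≤ 6`
keeps `2/n ≥ 1/3`, so the right side of (i) stays at least `9/50`.
-/

open Real Set Filter Topology

def CapillaryParamsFeasible (n : ℕ) (c K : ℝ) : Prop :=
  ∃ p ∈ Set.Ioo (1 / 2 : ℝ) 1, ∃ ε > (0 : ℝ), ∃ lam ∈ Set.Ioo (0 : ℝ) 1,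
    3 * c * K ≤ p * (p - 2 + (1 - lam) * (1 + 2 / (n : ℝ)) + lam) ∧
    (1 + ε) ^ 2 ≤ 2 * (1 - 2 * c * K) ∧
    ((n : ℝ) / 2 - 2 + ε) ^ 2 ≤ 2 * (1 - 2 * c * K) ∧
    1 - p + 2 * c * K ≥ 0

theorem capillaryParamsFeasible_of_abs_mul_le {n : ℕ} (hn2 : 2 ≤ n) (hn6 : n ≤ 6) {c K : ℝ}
    (hcK : |c * K| ≤ 1 / 20) : CapillaryParamsFeasible n c K := by
  obtain ⟨hcK_lower, hcK_upper⟩ := abs_le.mp hcK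
  have hn2' : (2 : ℝ) ≤ n := by exact_mod_cast hn2
  have hn6' : (n : ℝ) ≤ 6 := by exact_mod_cast hn6
  have h2n : (1 : ℝ) / 3 ≤ 2 / n := by rw [le_div_iff₀ (by linarith)]; linarith
  refine ⟨9 / 10, by norm_num, 1 / 10, by norm_num, 1 / 10, by norm_num, ?_, ?_, ?_, ?_⟩
  · have : (9 / 10 : ℝ) * (9 / 10 - 2 + (1 - 1 / 10) * (1 + 2 / n) + 1 / 10)
        = -9 / 100 + 81 / 100 * (2 / n) := by ring
    rw [this]
    linarith
  · linarith
  · nlinarith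
  · linarith

theorem tendsto_abs_cot_div_sin_nhds_pi_div_two :
    Tendsto (fun θ => |cot θ| / sin θ) (𝓝 (π / 2)) (𝓝 0) := by
  have hcont : ContinuousAt (fun θ => |cos θ / sin θ| / sin θ) (π / 2) := by
    have : sin (π / 2) ≠ 0 := by simp
    fun_prop (disch := exact this)
  simpa [cot_eq_cos_div_sin] using hcont.tendsto

theorem capillary_parameter_feasibility_general
    (n : ℕ) (hn2 : 2 ≤ n) (hn6 : n ≤ 6) (c : ℝ) :
    ∃ θ₁ ∈ Set.Ioo (0 : ℝ) (π / 2),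
      ∀ θ ∈ Set.Ioc (π / 2 - θ₁) (π / 2),
        ∃ p ∈ Set.Ioo (1 / 2 : ℝ) 1, ∃ ε > (0 : ℝ), ∃ lam ∈ Set.Ioo (0 : ℝ) 1,
          3 * c * (|Real.cot θ| / Real.sin θ)
              ≤ p * (p - 2 + (1 - lam) * (1 + 2 / (n : ℝ)) + lam) ∧
          (1 + ε) ^ 2 ≤ 2 * (1 - 2 * c * (|Real.cot θ| / Real.sin θ)) ∧
          ((n : ℝ) / 2 - 2 + ε) ^ 2 ≤ 2 * (1 - 2 * c * (|Real.cot θ| / Real.sin θ)) ∧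
          1 - p + 2 * c * (|Real.cot θ| / Real.sin θ) ≥ 0 := by
  have hsmall : ∀ᶠ θ in 𝓝[≤] (π / 2), |c * (|cot θ| / sin θ)| ≤ 1 / 20 := by
    have h := (tendsto_abs_cot_div_sin_nhds_pi_div_two.const_mul c).abs
    rw [mul_zero, abs_zero] at h
    exact nhdsWithin_le_nhds (h.eventually_le_const (by norm_num))
  obtain ⟨l, hl, hsub⟩ := (mem_nhdsLE_iff_exists_Ioc_subset' pi_div_two_pos).mp hsmall
  have hl' : l < π / 2 := hl
  set θ₁ := min (π / 2 - l) (π / 4)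
  have hθ₁l : θ₁ ≤ π / 2 - l := min_le_left _ _
  have hθ₁π : θ₁ ≤ π / 4 := min_le_right _ _
  refine ⟨θ₁, ⟨by positivity, by linarith [pi_pos]⟩, fun θ hθ => ?_⟩
  exact capillaryParamsFeasible_of_abs_mul_le hn2 hn6
    (hsub (Ioc_subset_Ioc_left (by linarith) hθ))

/-- Feasibility of the parameters `(p, ε, λ)` in the Simons-type argument for stable
minimizing capillary cones with contact angle `θ` close to `π/2`, in dimensions
`2 ≤ n ≤ 6`.  Here `K = |cot θ| / sin θ`. -/
theorem capillary_parameter_feasibility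
    (n : ℕ) (hn2 : 2 ≤ n) (hn6 : n ≤ 6) (c : ℝ) (hc : 0 < c) :
    ∃ θ₁ ∈ Set.Ioo (0 : ℝ) (π / 2),
      ∀ θ ∈ Set.Ioc (π / 2 - θ₁) (π / 2),
        ∃ p ∈ Set.Ioo (1 / 2 : ℝ) 1, ∃ ε > (0 : ℝ), ∃ lam ∈ Set.Ioo (0 : ℝ) 1,
          3 * c * (|Real.cot θ| / Real.sin θ)
              ≤ p * (p - 2 + (1 - lam) * (1 + 2 / (n : ℝ)) + lam) ∧
          (1 + ε) ^ 2 ≤ 2 * (1 - 2 * c * (|Real.cot θ| / Real.sin θ)) ∧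
          ((n : ℝ) / 2 - 2 + ε) ^ 2 ≤ 2 * (1 - 2 * c * (|Real.cot θ| / Real.sin θ)) ∧
          1 - p + 2 * c * (|Real.cot θ| / Real.sin θ) ≥ 0 :=
  capillary_parameter_feasibility_general n hn2 hn6 c
end
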